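/- arXiv:2010.16360 — 2 statements merged into one kernel-verified Lean document; each statement's English description precedes it below -/
import Mathlib

section
/- Let X_1, X_2, ... be an AI(α_n) sequence with common marginal supported on a compact standard set S (constants δ, λ), and assume ∑_{n≥1} α_n / (n^β log n) < ∞ for every β > 1. Then almost surely, limsup_{n→∞} (n / log n)^{1/d} d_H({X_1,...,X_n}, S) ≤ (2/(δ ω_d))^{1/d}. -/
/-!
Cover `S` by a maximal `2 r₁`-separated subset `T ⊆ S`; the balls `B(t, r₁)` are disjoint, so
standardness gives `#T ≤ 1 / (δ ω_d r₁^d)`. If every ball `B(t, r₂)`, `t ∈ T`, contains one of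
`X_1, …, X_n`, then `d_H ≤ 2 r₁ + r₂`. By the AI(α_n) density bound, all `n` points miss a fixed
ball with probability at most `(1 + α_n) (1 - δ ω_d r₂^d)^n ≤ (1 + α_n) exp (-n δ ω_d r₂^d)`.
With `r₁, r₂` proportional to `(log n / n)^{1/d}` and `n δ ω_d r₂^d = κ log n`, `κ > 2`, the
tail bound is `O((1 + α_n) n^{1-κ} / log n)`, summable by the hypothesis on `α_n`, and
Borel–Cantelli gives `limsup ≤ c` for every `c > (2 / (δ ω_d))^{1/d}`.
-/

open scoped ENNReal NNReal
open MeasureTheory Metric Filter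

noncomputable section

abbrev Euc (d : ℕ) := EuclideanSpace ℝ (Fin d)

open scoped Topology

namespace MeasureTheory

variable {α : Type*} [MeasurableSpace α] {μ : Measure α}

theorem lintegral_le_lintegral_mul_of_le_mul {m h : α → ℝ≥0∞} {K : ℝ≥0∞} (hK : K ≠ ∞)
    (hh : ∫⁻ a, h a ∂μ ≠ ∞) (hmh : ∀ a, h a ≠ ∞ → m a ≤ h a * K) :
    ∫⁻ a, m a ∂μ ≤ (∫⁻ a, h a ∂μ) * K := by
  rcases eq_or_ne K 0 with rfl | hK0
  · -- a measurable minorant of `m` lives on `{h = ∞}`, which has no non-null measurable subset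
    obtain ⟨m', hm', hm'm, hint⟩ := exists_measurable_le_lintegral_eq μ m
    have hB : MeasurableSet {a | m' a ≠ 0} := (hm' (measurableSet_singleton 0)).compl
    have hoff : ∀ a, m' a ≠ 0 → h a = ∞ := fun a ha => by
      by_contra hha
      exact ha (le_antisymm ((hm'm a).trans (by simpa using hmh a hha)) bot_le)
    have hnull : μ {a | m' a ≠ 0} = 0 := by
      have hle : ∞ * μ {a | m' a ≠ 0} ≤ ∫⁻ a, h a ∂μ := by
        rw [← lintegral_indicator_const hB]
        exact lintegral_mono fun a => Set.indicator_apply_le fun ha => (hoff a ha).ge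
      by_contra h0
      exact hh (top_le_iff.1 (by simpa [ENNReal.top_mul h0] using hle))
    rw [hint, mul_zero, nonpos_iff_eq_zero, lintegral_eq_zero_iff hm']
    exact ae_iff.2 (by simpa using hnull)
  · calc ∫⁻ a, m a ∂μ ≤ ∫⁻ a, h a * K ∂μ := lintegral_mono fun a => by
          rcases eq_or_ne (h a) ∞ with ha | ha
          · simp [ha, ENNReal.top_mul hK0]
          · exact hmh a ha
      _ = (∫⁻ a, h a ∂μ) * K := lintegral_mul_const' K h hK

-- `h` is not assumed measurable because the densities in the AI(α_n) condition need not be.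
theorem lintegral_fin_prod_le_pow [SigmaFinite μ] (h : α → ℝ≥0∞) (n : ℕ) :
    ∫⁻ x, ∏ i, h (x i) ∂(Measure.pi fun _ : Fin n => μ) ≤ (∫⁻ a, h a ∂μ) ^ n := by
  induction n with
  | zero => simp
  | succ n ih =>
    set I := ∫⁻ a, h a ∂μ
    rcases eq_or_ne I ∞ with hI | hI
    · simp [hI]
    have he := measurePreserving_piFinSuccAbove (fun _ : Fin (n + 1) => μ) 0
    calc ∫⁻ x, ∏ i, h (x i) ∂(Measure.pi fun _ : Fin (n + 1) => μ)
        = ∫⁻ p, h p.1 * ∏ j, h (p.2 j) ∂(μ.prod (Measure.pi fun _ : Fin n => μ)) := by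
          rw [← he.lintegral_comp_emb (MeasurableEquiv.measurableEmbedding _)]
          simp [Fin.prod_univ_succ, Fin.tail]
      _ ≤ ∫⁻ a, ∫⁻ b, h a * ∏ j, h (b j) ∂(Measure.pi fun _ : Fin n => μ) ∂μ :=
          lintegral_prod_le _
      _ ≤ I * I ^ n := by
          refine lintegral_le_lintegral_mul_of_le_mul (ENNReal.pow_ne_top hI) hI fun a ha => ?_
          rw [lintegral_const_mul' _ _ ha]
          exact mul_le_mul_right ih _
      _ = I ^ (n + 1) := (pow_succ' I n).symm

theorem measure_forall_mem_le_of_density_le {Ω E : Type*} [MeasurableSpace Ω] [MeasureSpace E]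
    [SigmaFinite (volume : Measure E)] {P : Measure Ω} {n : ℕ} {Y : Ω → Fin n → E}
    (hY : Measurable Y) {fj : (Fin n → E) → ℝ≥0∞} {g : E → ℝ≥0∞}
    (hfj : P.map Y = volume.withDensity fj) {c : ℝ≥0∞} (hc : c ≠ ∞)
    (hle : ∀ x, fj x ≤ c * ∏ i, g (x i)) {A : Set E} (hA : MeasurableSet A) :
    P {ω | ∀ i, Y ω i ∈ A} ≤ c * volume.withDensity g A ^ n := by
  have hAn : MeasurableSet (Set.univ.pi fun _ : Fin n => A) := .univ_pi fun _ => hA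
  calc P {ω | ∀ i, Y ω i ∈ A}
      = ∫⁻ x, (Set.univ.pi fun _ => A).indicator fj x := by
        rw [lintegral_indicator hAn, ← withDensity_apply _ hAn, ← hfj,
          Measure.map_apply hY hAn]
        simp [Set.preimage]
    _ ≤ ∫⁻ x : Fin n → E, c * ∏ i, A.indicator g (x i) := lintegral_mono fun x => by
        by_cases hx : x ∈ Set.univ.pi fun _ => A
        · rw [Set.indicator_of_mem hx]
          refine (hle x).trans_eq ?_
          simp only [Set.indicator_of_mem (Set.mem_univ_pi.1 hx _)]
        · simp [Set.indicator_of_notMem hx]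
    _ = c * ∫⁻ x : Fin n → E, ∏ i, A.indicator g (x i) := lintegral_const_mul' _ _ hc
    _ ≤ c * volume.withDensity g A ^ n := by
        rw [withDensity_apply _ hA, ← lintegral_indicator hA, volume_pi]
        exact mul_le_mul_right (lintegral_fin_prod_le_pow _ n) c

theorem prob_compl_pow_le_exp [IsProbabilityMeasure μ] {B : Set α} (hB : MeasurableSet B) {a : ℝ}
    (ha : ENNReal.ofReal a ≤ μ B) (n : ℕ) :
    μ Bᶜ ^ n ≤ ENNReal.ofReal (Real.exp (-(n * a))) := by
  have hB' : μ Bᶜ ≤ ENNReal.ofReal (Real.exp (-a)) := calc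
    μ Bᶜ = 1 - μ B := prob_compl_eq_one_sub hB
    _ ≤ 1 - ENNReal.ofReal a := tsub_le_tsub_left ha 1
    _ ≤ ENNReal.ofReal (1 - a) := by
        rw [tsub_le_iff_right]
        simpa using ENNReal.ofReal_add_le (p := 1 - a) (q := a)
    _ ≤ ENNReal.ofReal (Real.exp (-a)) :=
        ENNReal.ofReal_le_ofReal (by linarith [Real.add_one_le_exp (-a)])
  calc μ Bᶜ ^ n ≤ ENNReal.ofReal (Real.exp (-a)) ^ n := pow_le_pow_left' hB' n
    _ = ENNReal.ofReal (Real.exp (-(n * a))) := by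
        rw [← ENNReal.ofReal_pow (Real.exp_pos _).le, ← Real.exp_nat_mul, mul_neg]

theorem ae_eventually_notMem_of_summable [IsFiniteMeasure μ] {s : ℕ → Set α} {b : ℕ → ℝ}
    (hb : Summable b) (hb0 : 0 ≤ b) (hμ : ∀ᶠ n in atTop, μ (s n) ≤ ENNReal.ofReal (b n)) :
    ∀ᵐ x ∂μ, ∀ᶠ n in atTop, x ∉ s n := by
  have hf : Summable fun n => (μ (s n)).toReal :=
    hb.of_norm_bounded_eventually_nat <| hμ.mono fun n hn => by
      rw [Real.norm_of_nonneg ENNReal.toReal_nonneg]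
      exact ENNReal.toReal_le_of_le_ofReal (hb0 n) hn
  refine ae_eventually_notMem ?_
  have hμs : ∀ n, μ (s n) = ENNReal.ofReal (μ (s n)).toReal := fun n =>
    (ENNReal.ofReal_toReal (measure_ne_top μ _)).symm
  rw [funext hμs, ← ENNReal.ofReal_tsum_of_nonneg (fun _ => ENNReal.toReal_nonneg) hf]
  exact ENNReal.ofReal_ne_top

theorem ae_le_of_forall_lt_ae_le {f : α → ℝ} {L : ℝ} (h : ∀ c, L < c → ∀ᵐ a ∂μ, f a ≤ c) :
    ∀ᵐ a ∂μ, f a ≤ L := by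
  have hk : ∀ k : ℕ, L < L + 1 / ((k : ℝ) + 1) := fun k => lt_add_of_pos_right L (by positivity)
  filter_upwards [ae_all_iff.2 fun k => h _ (hk k)] with a ha
  simpa using ge_of_tendsto' (tendsto_one_div_add_atTop_nhds_zero_nat.const_add L) ha

end MeasureTheory

namespace Metric

theorem hausdorffDist_le_of_subset_of_net {E : Type*} [PseudoMetricSpace E]
    {A S T : Set E} {r₁ r₂ : ℝ} (hr : 0 ≤ r₁ + r₂) (hAS : A ⊆ S)
    (hST : ∀ s ∈ S, ∃ t ∈ T, dist s t ≤ r₁) (hTA : ∀ t ∈ T, ∃ x ∈ A, dist t x ≤ r₂) :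
    hausdorffDist A S ≤ r₁ + r₂ := by
  refine hausdorffDist_le_of_mem_dist hr (fun x hx => ⟨x, hAS hx, by simpa using hr⟩) ?_
  intro s hs
  obtain ⟨t, ht, hst⟩ := hST s hs
  obtain ⟨x, hx, htx⟩ := hTA t ht
  exact ⟨x, hx, (dist_triangle s t x).trans (add_le_add hst htx)⟩

end Metric

section MetricMeasure

variable {E : Type*} [PseudoMetricSpace E] [MeasurableSpace E] [OpensMeasurableSpace E]
  {ν : Measure E} {S : Set E}

theorem Finset.card_mul_le_of_isSeparated {r a : ℝ}
    (hball : ∀ s ∈ S, ENNReal.ofReal a ≤ ν (closedBall s r)) {T : Finset E} (hTS : ↑T ⊆ S)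
    (hT : IsSeparated (ENNReal.ofReal (2 * r)) (T : Set E)) :
    T.card * ENNReal.ofReal a ≤ ν Set.univ := by
  have hdisj : (T : Set E).PairwiseDisjoint fun t => closedBall t r := fun s hs t ht hst => by
    refine closedBall_disjoint_closedBall ?_
    have : ENNReal.ofReal (2 * r) < edist s t := hT hs ht hst
    rw [edist_dist, ENNReal.ofReal_lt_ofReal_iff'] at this
    linarith
  calc T.card * ENNReal.ofReal a = ∑ _t ∈ T, ENNReal.ofReal a := by simp
    _ ≤ ∑ t ∈ T, ν (closedBall t r) := Finset.sum_le_sum fun t ht => hball t (hTS ht)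
    _ = ν (⋃ t ∈ T, closedBall t r) :=
        (measure_biUnion_finset hdisj fun _ _ => measurableSet_closedBall).symm
    _ ≤ ν Set.univ := measure_mono (Set.subset_univ _)

theorem IsCompact.exists_finset_dist_le_card_le [IsProbabilityMeasure ν] (hS : IsCompact S)
    {r a : ℝ} (hr : 0 < r) (ha : 0 < a)
    (hball : ∀ s ∈ S, ENNReal.ofReal a ≤ ν (closedBall s r)) :
    ∃ T : Finset E, ↑T ⊆ S ∧ (∀ s ∈ S, ∃ t ∈ T, dist s t ≤ 2 * r) ∧ (T.card : ℝ) ≤ a⁻¹ := by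
  lift r to ℝ≥0 using hr.le
  have hpack : packingNumber (2 * r) S ≠ ⊤ := by
    obtain ⟨N, -, hN, hcover⟩ := exists_finite_isCover_of_isCompact (by exact_mod_cast hr.ne') hS
    exact ne_top_of_le_ne_top hN.encard_lt_top.ne
      ((packingNumber_two_mul_le_externalCoveringNumber r S).trans
        hcover.externalCoveringNumber_le_encard)
  have hfin : (maximalSeparatedSet (2 * r) S).Finite := Set.encard_ne_top_iff.1 <| by
    rwa [encard_maximalSeparatedSet hpack]
  refine ⟨hfin.toFinset, by simpa using maximalSeparatedSet_subset, fun s hs => ?_, ?_⟩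
  · obtain ⟨t, ht, hst⟩ := isCover_maximalSeparatedSet hpack hs
    refine ⟨t, by simpa using ht, ?_⟩
    have : edist s t ≤ ((2 * r : ℝ≥0) : ℝ≥0∞) := hst
    rw [edist_le_coe, ← NNReal.coe_le_coe, coe_nndist] at this
    exact_mod_cast this
  · have hsep : IsSeparated (ENNReal.ofReal (2 * r)) (hfin.toFinset : Set E) := by
      simpa [ENNReal.ofReal, Real.toNNReal_mul] using
        isSeparated_maximalSeparatedSet (ε := 2 * r) (A := S)
    have := hfin.toFinset.card_mul_le_of_isSeparated hball
      (by simpa using maximalSeparatedSet_subset) hsep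
    rw [measure_univ, ← ENNReal.ofReal_natCast, ← ENNReal.ofReal_mul (by positivity),
      ENNReal.ofReal_le_one] at this
    rwa [← le_div_iff₀ ha, one_div] at this

end MetricMeasure

theorem summable_div_log_mul_exp {α : ℕ → ℝ} {κ : ℝ} (hκ : 2 < κ)
    (hsum : Summable fun n : ℕ => α n / ((n : ℝ) ^ (κ - 1) * Real.log n)) :
    Summable fun n : ℕ => n / Real.log n * Real.exp (-(κ * Real.log n)) * (1 + α n) := by
  have hpow : Summable fun n : ℕ => 1 / ((n : ℝ) ^ (κ - 1) * Real.log n) := by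
    have hβ : 1 < κ - 1 := by linarith
    refine (Real.summable_one_div_nat_rpow.2 hβ).of_norm_bounded_eventually_nat ?_
    filter_upwards [eventually_gt_atTop 0,
      (Real.tendsto_log_atTop.comp tendsto_natCast_atTop_atTop).eventually_ge_atTop 1]
      with n hn hlog
    have hpos : (0 : ℝ) < (n : ℝ) ^ (κ - 1) := Real.rpow_pos_of_pos (by exact_mod_cast hn) _
    rw [Real.norm_of_nonneg (by positivity)]
    exact one_div_le_one_div_of_le hpos (le_mul_of_one_le_right hpos.le hlog)
  refine (hpow.add hsum).congr_atTop <| (eventually_gt_atTop 1).mono fun n hn => ?_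
  have hn : (1 : ℝ) < n := by exact_mod_cast hn
  have hlog : 0 < Real.log n := Real.log_pos hn
  have hexp : Real.exp (-(κ * Real.log n)) = ((n : ℝ) ^ (κ - 1) * n)⁻¹ := by
    rw [Real.exp_neg, mul_comm, ← Real.rpow_def_of_pos (by linarith),
      Real.rpow_sub_one (by positivity), div_mul_cancel₀ _ (by positivity)]
  dsimp only
  rw [hexp]
  field_simp

section HausdorffDistance

variable {Ω E : Type*} [MeasurableSpace Ω] [PseudoMetricSpace E] [MeasurableSpace E]
  [OpensMeasurableSpace E] {P : Measure Ω} {ν : Measure E} [IsProbabilityMeasure ν] {S : Set E}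

theorem measure_lt_hausdorffDist_range_le (hS : IsCompact S) {n : ℕ} {Y : Fin n → Ω → E}
    (hin : ∀ᵐ ω ∂P, ∀ i, Y i ω ∈ S) {C : ℝ≥0∞}
    (hY : ∀ A, MeasurableSet A → P {ω | ∀ i, Y i ω ∈ A} ≤ C * ν A ^ n)
    {r₁ r₂ a₁ a₂ : ℝ} (hr₁ : 0 < r₁) (hr₂ : 0 ≤ r₂) (ha₁ : 0 < a₁)
    (h₁ : ∀ s ∈ S, ENNReal.ofReal a₁ ≤ ν (closedBall s r₁))
    (h₂ : ∀ s ∈ S, ENNReal.ofReal a₂ ≤ ν (closedBall s r₂)) :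
    P {ω | 2 * r₁ + r₂ < hausdorffDist (Set.range fun i => Y i ω) S} ≤
      ENNReal.ofReal (a₁⁻¹ * Real.exp (-(n * a₂))) * C := by
  obtain ⟨T, hTS, hST, hcard⟩ := hS.exists_finset_dist_le_card_le hr₁ ha₁ h₁
  set q := ENNReal.ofReal (Real.exp (-(n * a₂)))
  have hmiss : {ω | 2 * r₁ + r₂ < hausdorffDist (Set.range fun i => Y i ω) S} ≤ᵐ[P]
      ⋃ t ∈ T, {ω | ∀ i, Y i ω ∈ (closedBall t r₂)ᶜ} := by
    filter_upwards [hin] with ω hω hlt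
    change ω ∈ ⋃ t ∈ T, _
    simp only [Set.mem_iUnion, Set.mem_ofPred_eq, Set.mem_compl_iff, exists_prop]
    by_contra! hhit
    refine (not_le.2 hlt) (hausdorffDist_le_of_subset_of_net (by linarith)
      (Set.range_subset_iff.2 hω) hST fun t ht => ?_)
    obtain ⟨i, hi⟩ := hhit t ht
    exact ⟨Y i ω, Set.mem_range_self i, by rwa [dist_comm, ← mem_closedBall]⟩
  calc P {ω | 2 * r₁ + r₂ < hausdorffDist (Set.range fun i => Y i ω) S}
      ≤ P (⋃ t ∈ T, {ω | ∀ i, Y i ω ∈ (closedBall t r₂)ᶜ}) := measure_mono_ae hmiss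
    _ ≤ ∑ t ∈ T, P {ω | ∀ i, Y i ω ∈ (closedBall t r₂)ᶜ} := measure_biUnion_finset_le _ _
    _ ≤ ∑ _t ∈ T, C * q := Finset.sum_le_sum fun t ht =>
        (hY _ measurableSet_closedBall.compl).trans <| mul_le_mul_right
          (prob_compl_pow_le_exp measurableSet_closedBall (h₂ t (hTS ht)) n) C
    _ = T.card * (C * q) := by simp
    _ ≤ ENNReal.ofReal a₁⁻¹ * (C * q) := by
        gcongr
        rw [← ENNReal.ofReal_natCast]
        exact ENNReal.ofReal_le_ofReal hcard
    _ = ENNReal.ofReal (a₁⁻¹ * Real.exp (-(n * a₂))) * C := by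
        rw [ENNReal.ofReal_mul (by positivity)]
        ring

theorem measure_rate_lt_hausdorffDist_le (hS : IsCompact S) {n : ℕ}
    (hn : 1 < n) {Y : Fin n → Ω → E} (hin : ∀ᵐ ω ∂P, ∀ i, Y i ω ∈ S) {C : ℝ≥0∞}
    (hY : ∀ A, MeasurableSet A → P {ω | ∀ i, Y i ω ∈ A} ≤ C * ν A ^ n)
    {d : ℕ} (hd : d ≠ 0) {D lam : ℝ} (hD : 0 < D)
    (hstd : ∀ s ∈ S, ∀ r, 0 < r → r ≤ lam → ENNReal.ofReal (D * r ^ d) ≤ ν (closedBall s r))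
    {c' c : ℝ} (hc' : 0 < c') (hc'c : c' < c)
    (hlam : c * (Real.log n / n) ^ (1 / (d : ℝ)) < lam) :
    P {ω | c * (Real.log n / n) ^ (1 / (d : ℝ)) <
        hausdorffDist (Set.range fun i => Y i ω) S} ≤
      ENNReal.ofReal ((D * ((c - c') / 2) ^ d)⁻¹ *
        (n / Real.log n * Real.exp (-(D * c' ^ d * Real.log n)))) * C := by
  set t := (Real.log n / n) ^ (1 / (d : ℝ))
  have hn0 : (0 : ℝ) < n := by positivity
  have hlog : 0 < Real.log n := Real.log_pos (by exact_mod_cast hn)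
  have ht : 0 < t := Real.rpow_pos_of_pos (div_pos hlog hn0) _
  have ht_pow : t ^ d = Real.log n / n := by
    simp only [t]
    rw [one_div, Real.rpow_inv_natCast_pow (div_pos hlog hn0).le hd]
  -- in the paper's notation `ε = c * t`, `υ = c' / c`, `r₁ = (1 - υ) ε / 2`, `r₂ = υ ε`
  set r₁ := (c - c') / 2 * t
  set r₂ := c' * t
  have hr₁ : 0 < r₁ := mul_pos (by linarith) ht
  have hr₂ : 0 < r₂ := mul_pos hc' ht
  have hr₁lam : r₁ ≤ lam := le_trans (by simp only [r₁]; gcongr; linarith) hlam.le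
  have hr₂lam : r₂ ≤ lam := le_trans (by simp only [r₂]; gcongr) hlam.le
  have key := measure_lt_hausdorffDist_range_le hS hin hY hr₁ hr₂.le (by positivity)
    (fun s hs => hstd s hs _ hr₁ hr₁lam) (fun s hs => hstd s hs _ hr₂ hr₂lam)
  rw [show 2 * r₁ + r₂ = c * t by ring] at key
  refine key.trans_eq ?_
  have ha₁ : D * r₁ ^ d = D * ((c - c') / 2) ^ d * (Real.log n / n) := by
    rw [mul_pow, ht_pow, mul_assoc]
  have ha₂ : n * (D * r₂ ^ d) = D * c' ^ d * Real.log n := by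
    rw [mul_pow, ht_pow]
    field_simp
  rw [ha₁, ha₂, mul_inv, inv_div, mul_assoc]

theorem ae_eventually_rpow_mul_hausdorffDist_le [IsProbabilityMeasure P]
    (hS : IsCompact S) {X : ℕ → Ω → E} (hin : ∀ᵐ ω ∂P, ∀ i, X i ω ∈ S) {α : ℕ → ℝ}
    (hα : ∀ n, 0 ≤ α n)
    (hX : ∀ n, 0 < n → ∀ A, MeasurableSet A →
      P {ω | ∀ i : Fin n, X i ω ∈ A} ≤ ENNReal.ofReal (1 + α n) * ν A ^ n)
    {d : ℕ} (hd : d ≠ 0) {D lam : ℝ} (hD : 0 < D) (hlam : 0 < lam)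
    (hstd : ∀ s ∈ S, ∀ r, 0 < r → r ≤ lam → ENNReal.ofReal (D * r ^ d) ≤ ν (closedBall s r))
    {c' c : ℝ} (hc' : 0 < c') (hc'c : c' < c) (hκ : 2 < D * c' ^ d)
    (hsum : Summable fun n : ℕ => α n / ((n : ℝ) ^ (D * c' ^ d - 1) * Real.log n)) :
    ∀ᵐ ω ∂P, ∀ᶠ n : ℕ in atTop, ((n : ℝ) / Real.log n) ^ (1 / (d : ℝ)) *
      hausdorffDist (Set.range fun i : Fin n => X i ω) S ≤ c := by
  set t : ℕ → ℝ := fun n => (Real.log n / n) ^ (1 / (d : ℝ))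
  have ht : Tendsto t atTop (𝓝 0) := by
    have := (Real.isLittleO_log_id_atTop.tendsto_div_nhds_zero.comp
      tendsto_natCast_atTop_atTop).rpow_const (p := 1 / (d : ℝ)) (Or.inr (by positivity))
    rwa [Real.zero_rpow (by positivity)] at this
  set b : ℕ → ℝ := fun n => (D * ((c - c') / 2) ^ d)⁻¹ *
    (n / Real.log n * Real.exp (-(D * c' ^ d * Real.log n)) * (1 + α n))
  have hb0 : 0 ≤ b := fun n => by
    have := hα n
    have := Real.log_natCast_nonneg n
    positivity
  have hbound : ∀ᶠ n in atTop,
      P {ω | c * t n < hausdorffDist (Set.range fun i : Fin n => X i ω) S} ≤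
        ENNReal.ofReal (b n) := by
    filter_upwards [eventually_gt_atTop 1,
      (ht.const_mul c).eventually_lt_const (by simpa using hlam)] with n hn hlam'
    refine (measure_rate_lt_hausdorffDist_le hS hn (hin.mono fun ω h i => h i)
      (hX n (by omega)) hd hD hstd hc' hc'c hlam').trans_eq ?_
    rw [← ENNReal.ofReal_mul (by positivity)]
    simp only [b]
    ring_nf
  filter_upwards [ae_eventually_notMem_of_summable
    ((summable_div_log_mul_exp hκ hsum).mul_left _) hb0 hbound] with ω hω
  filter_upwards [hω, eventually_gt_atTop 1] with n hn hn1
  have hn0 : (0 : ℝ) < n := by positivity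
  have hlog : 0 < Real.log n := Real.log_pos (by exact_mod_cast hn1)
  have hcancel : (n : ℝ) / Real.log n * (Real.log n / n) = 1 := by field_simp
  calc ((n : ℝ) / Real.log n) ^ (1 / (d : ℝ)) * hausdorffDist (Set.range fun i : Fin n => X i ω) S
      ≤ ((n : ℝ) / Real.log n) ^ (1 / (d : ℝ)) * (c * t n) :=
        mul_le_mul_of_nonneg_left (not_lt.1 hn) (by positivity)
    _ = c := by
        rw [mul_left_comm, ← Real.mul_rpow (by positivity) (by positivity), hcancel,
          Real.one_rpow, mul_one]

end HausdorffDistance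

theorem statement5_general {d : ℕ} (hd : 1 ≤ d) {Ω : Type*} [MeasurableSpace Ω]
    (P : Measure Ω) [IsProbabilityMeasure P]
    (X : ℕ → Ω → Euc d) (hX : ∀ i, Measurable (X i))
    (S : Set (Euc d)) (hS : IsCompact S)
    (ν : Measure (Euc d)) [IsProbabilityMeasure ν]
    (hmarg : ∀ i, Measure.map (X i) P = ν)
    (δ lam : ℝ) (hδ : 0 < δ) (hlam : 0 < lam)
    (ωd : ℝ) (hωd : ωd = (volume (Metric.closedBall (0 : Euc d) 1)).toReal)
    (hstd : ∀ s ∈ S, ∀ r : ℝ, 0 < r → r ≤ lam →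
      ENNReal.ofReal (δ * ωd * r ^ d) ≤ ν (Metric.closedBall s r))
    (αn : ℕ → ℝ) (hα : ∀ n, 0 ≤ αn n)
    (hAI : ∀ n : ℕ, ∃ fj : (Fin n → Euc d) → ℝ≥0∞, ∃ g : Euc d → ℝ≥0∞,
      Measure.map (fun ω (i : Fin n) => X i.1 ω) P = volume.withDensity fj ∧
      (∀ i : Fin n, Measure.map (X i.1) P = volume.withDensity g) ∧
      ∀ x : Fin n → Euc d, fj x ≤ ENNReal.ofReal (1 + αn n) * ∏ i, g (x i))
    (hsum : ∀ β : ℝ, 1 < β →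
      Summable (fun n : ℕ => αn n / ((n : ℝ) ^ β * Real.log n)))
    (hin : ∀ i, ∀ᵐ ω ∂P, X i ω ∈ S) :
    ∀ᵐ ω ∂P,
      Filter.limsup (fun n : ℕ =>
          ((n : ℝ) / Real.log n) ^ (1 / (d : ℝ)) *
            Metric.hausdorffDist (Set.range fun i : Fin n => X i.1 ω) S)
        Filter.atTop ≤ (2 / (δ * ωd)) ^ (1 / (d : ℝ)) := by
  have hd0 : d ≠ 0 := by omega
  have hD : 0 < δ * ωd := mul_pos hδ <| hωd ▸ ENNReal.toReal_pos
    (measure_closedBall_pos volume _ one_pos).ne' measure_closedBall_lt_top.ne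
  have hXn : ∀ n, 0 < n → ∀ A, MeasurableSet A →
      P {ω | ∀ i : Fin n, X i ω ∈ A} ≤ ENNReal.ofReal (1 + αn n) * ν A ^ n := by
    intro n hn A hA
    obtain ⟨fj, g, hfj, hg, hle⟩ := hAI n
    rw [← hmarg 0, hg ⟨0, hn⟩]
    exact measure_forall_mem_le_of_density_le (measurable_pi_lambda _ fun i => hX i) hfj
      ENNReal.ofReal_ne_top hle hA
  refine ae_le_of_forall_lt_ae_le fun c hc => ?_
  obtain ⟨c', hLc', hc'c⟩ := exists_between hc
  have hκ : 2 < δ * ωd * c' ^ d := by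
    have := pow_lt_pow_left₀ hLc' (by positivity) hd0
    rwa [one_div, Real.rpow_inv_natCast_pow (by positivity) hd0, div_lt_iff₀' hD] at this
  have hc' : 0 < c' := lt_of_le_of_lt (by positivity) hLc'
  filter_upwards [ae_eventually_rpow_mul_hausdorffDist_le hS (ae_all_iff.2 hin) hα hXn hd0 hD
    hlam hstd hc' hc'c hκ (hsum _ (by linarith))] with ω hω
  refine limsup_le_of_le (isCoboundedUnder_le_of_le atTop (x := 0) fun n => ?_) hω
  exact mul_nonneg (Real.rpow_nonneg (div_nonneg n.cast_nonneg (Real.log_natCast_nonneg n)) _)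
    hausdorffDist_nonneg

/-- For an `AI(α_n)` sequence with common marginal supported on a compact standard set `S`
(constants `δ, λ`) and `∑ α_n/(n^β log n) < ∞` for every `β > 1`, almost surely
`limsup (n/log n)^{1/d} d_H({X_1,…,X_n}, S) ≤ (2/(δ ω_d))^{1/d}`. -/
theorem statement5 {d : ℕ} (hd : 1 ≤ d) {Ω : Type*} [MeasurableSpace Ω]
    (P : Measure Ω) [IsProbabilityMeasure P]
    (X : ℕ → Ω → Euc d) (hX : ∀ i, Measurable (X i))
    (S : Set (Euc d)) (hS : IsCompact S) (hSne : S.Nonempty)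
    (ν : Measure (Euc d)) [IsProbabilityMeasure ν]
    (hmarg : ∀ i, Measure.map (X i) P = ν)
    (δ lam : ℝ) (hδ : 0 < δ) (hlam : 0 < lam)
    (ωd : ℝ) (hωd : ωd = (volume (Metric.closedBall (0 : Euc d) 1)).toReal)
    (hstd : ∀ s ∈ S, ∀ r : ℝ, 0 < r → r ≤ lam →
      ENNReal.ofReal (δ * ωd * r ^ d) ≤ ν (Metric.closedBall s r))
    (αn : ℕ → ℝ) (hα : ∀ n, 0 ≤ αn n)
    (hAI : ∀ n : ℕ, ∃ fj : (Fin n → Euc d) → ℝ≥0∞, ∃ g : Euc d → ℝ≥0∞,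
      Measure.map (fun ω (i : Fin n) => X i.1 ω) P = volume.withDensity fj ∧
      (∀ i : Fin n, Measure.map (X i.1) P = volume.withDensity g) ∧
      ∀ x : Fin n → Euc d, fj x ≤ ENNReal.ofReal (1 + αn n) * ∏ i, g (x i))
    (hsum : ∀ β : ℝ, 1 < β →
      Summable (fun n : ℕ => αn n / ((n : ℝ) ^ β * Real.log n)))
    (hin : ∀ i, ∀ᵐ ω ∂P, X i ω ∈ S) :
    ∀ᵐ ω ∂P,
      Filter.limsup (fun n : ℕ =>
          ((n : ℝ) / Real.log n) ^ (1 / (d : ℝ)) *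
            Metric.hausdorffDist (Set.range fun i : Fin n => X i.1 ω) S)
        Filter.atTop ≤ (2 / (δ * ωd)) ^ (1 / (d : ℝ)) :=
  statement5_general hd P X hX S hS ν hmarg δ lam hδ hlam ωd hωd hstd αn hα hAI hsum hin
end
end

section
/- Let P = {p_1,...,p_n} ⊂ R^d, μ_P = (1/n)∑_{p∈P} δ_p the empirical measure, and m_0 = k_0/n for some integer 1 ≤ k_0 ≤ n. Then for every x ∈ R^d, the distance-to-measure function satisfies d_{μ_P, m_0}(x) = ( (1/k_0) ∑_{p ∈ NN_P^{k_0}(x)} ‖p − x‖^2 )^{1/2}, where NN_P^{k_0}(x) is a set of k_0 nearest neighbours of x in P. -/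
open scoped ENNReal NNReal
open MeasureTheory Metric Filter

noncomputable section

/-- `δ_{μ,m}(x) = inf {r > 0 : μ(B̄(x,r)) > m}`. -/
noncomputable def deltaMeas {d : ℕ} (μ : Measure (Euc d)) (m : ℝ) (x : Euc d) : ℝ :=
  sInf {r : ℝ | 0 < r ∧ m < (μ (Metric.closedBall x r)).toReal}

/-- The distance to the measure `μ` at level `m₀`:
`d_{μ,m₀}(x) = ((1/m₀) ∫_0^{m₀} δ_{μ,m}(x)² dm)^{1/2}`. -/
noncomputable def distToMeas {d : ℕ} (μ : Measure (Euc d)) (m0 : ℝ) (x : Euc d) : ℝ :=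
  Real.sqrt ((1 / m0) * ∫ m in (0 : ℝ)..m0, (deltaMeas μ m x) ^ 2)

/-! Under `μ_P` the closed ball `B̄(x, r)` has mass `#{i | ‖pᵢ - x‖ ≤ r} / n`, so `δ_{μ_P,m}(x)`
is constant on each `[j/n, (j+1)/n)`, equal to the `(j+1)`-st smallest distance from `x` to the
points. Hence `∫_0^{k₀/n} δ²` is `1/n` times the sum of the `k₀` smallest squared distances, and
every set of `k₀` nearest neighbours realises this sum: two such sets differ only in points that
are all at one common distance from `x`. -/

open scoped Finset

theorem Finset.sum_eq_sum_of_card_eq_of_forall_le {α β : Type*} [AddCommMonoid β]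
    [PartialOrder β] {F : α → β} {s t : Finset α} (hst : #s = #t)
    (hs : ∀ i ∈ s, ∀ j ∉ s, F i ≤ F j) (ht : ∀ i ∈ t, ∀ j ∉ t, F i ≤ F j) :
    ∑ i ∈ s, F i = ∑ i ∈ t, F i := by
  classical
  have hF : ∀ i ∈ s \ t, ∀ j ∈ t \ s, F i = F j := fun i hi j hj =>
    le_antisymm (hs i (mem_sdiff.1 hi).1 j (mem_sdiff.1 hj).2)
      (ht j (mem_sdiff.1 hj).1 i (mem_sdiff.1 hi).2)
  let e : (s \ t : Finset α) ≃ (t \ s : Finset α) :=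
    Fintype.equivOfCardEq (by simpa using card_sdiff_comm hst)
  have hsdiff : ∑ i ∈ s \ t, F i = ∑ j ∈ t \ s, F j := by
    rw [← sum_coe_sort, ← sum_coe_sort (t \ s)]
    exact Fintype.sum_equiv e _ _ fun i => hF _ i.2 _ (e i).2
  rw [← sum_inter_add_sum_sdiff s t, ← sum_inter_add_sum_sdiff t s, inter_comm, hsdiff]

theorem sum_castLE_eq_sum_of_forall_le {β : Type*} [AddCommMonoid β] [PartialOrder β]
    {n k : ℕ} (hk : k ≤ n) {F : Fin n → β} {σ : Equiv.Perm (Fin n)}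
    (hσ : Monotone (F ∘ σ))
    {s : Finset (Fin n)} (hcard : #s = k) (hs : ∀ i ∈ s, ∀ j ∉ s, F i ≤ F j) :
    ∑ j : Fin k, F (σ (Fin.castLE hk j)) = ∑ i ∈ s, F i := by
  set t := Finset.univ.map ((Fin.castLEEmb hk).trans σ.toEmbedding)
  have ht : ∀ i ∈ t, ∀ j ∉ t, F i ≤ F j := by
    simp only [t, Finset.mem_map, Finset.mem_univ, true_and, not_exists]
    rintro _ ⟨a, rfl⟩ j hj
    have hk_le : k ≤ (σ.symm j : ℕ) := by
      by_contra! hlt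
      exact hj ⟨_, hlt⟩ (by simp)
    simpa using hσ (show Fin.castLE hk a ≤ σ.symm j from Fin.le_def.2 (by simp; omega))
  calc ∑ j : Fin k, F (σ (Fin.castLE hk j)) = ∑ i ∈ t, F i := by simp [t]
    _ = ∑ i ∈ s, F i :=
      Finset.sum_eq_sum_of_card_eq_of_forall_le (by simp [t, hcard]) ht hs

theorem Tuple.sort_le_iff_lt_card {α : Type*} [LinearOrder α] {n : ℕ} (f : Fin n → α)
    (j : Fin n) (r : α) : f (Tuple.sort f j) ≤ r ↔ (j : ℕ) < #{i | f i ≤ r} := by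
  have hcount : #{b | f (Tuple.sort f b) ≤ r} = #{i | f i ≤ r} :=
    Finset.card_equiv (Tuple.sort f) (by simp)
  rw [← hcount]
  constructor
  · intro h
    calc (j : ℕ) < #(Finset.Iic j) := by simp
      _ ≤ _ := Finset.card_le_card fun b hb =>
        Finset.mem_filter.2 ⟨Finset.mem_univ b,
          (Tuple.monotone_sort f (Finset.mem_Iic.1 hb)).trans h⟩
  · intro h
    by_contra! hr
    have hsub : ({b | f (Tuple.sort f b) ≤ r} : Finset (Fin n)) ⊆ Finset.Iio j := by
      intro b hb
      simp only [Finset.mem_filter, Finset.mem_univ, true_and] at hb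
      exact Finset.mem_Iio.2 (lt_of_not_ge fun hjb =>
        (hr.trans_le (Tuple.monotone_sort f hjb)).not_ge hb)
    simpa using (Finset.card_le_card hsub).trans_lt' h

theorem intervalIntegral_eq_sum_of_eqOn_Ico {E : Type*} [NormedAddCommGroup E]
    [NormedSpace ℝ E] [CompleteSpace E] {h : ℝ → E} {a : ℕ → ℝ} {k : ℕ} (ha : Monotone a)
    (hh : ∀ j < k, ∀ m ∈ Set.Ico (a j) (a (j + 1)), h m = h (a j)) :
    ∫ m in a 0..a k, h m = ∑ j ∈ Finset.range k, (a (j + 1) - a j) • h (a j) := by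
  have hpiece : ∀ j < k, Set.EqOn h (fun _ => h (a j)) (Set.uIoo (a j) (a (j + 1))) := by
    intro j hj m hm
    rw [Set.uIoo_of_le (ha j.le_succ)] at hm
    exact hh j hj m (Set.Ioo_subset_Ico_self hm)
  rw [← intervalIntegral.sum_integral_adjacent_intervals fun j hj =>
    (intervalIntegrable_congr_uIoo (hpiece j hj)).2 intervalIntegrable_const]
  refine Finset.sum_congr rfl fun j hj => ?_
  rw [intervalIntegral.integral_congr_uIoo (hpiece j (Finset.mem_range.1 hj)),
    intervalIntegral.integral_const]

theorem Real.sInf_setOf_pos_and_le {a : ℝ} (ha : 0 ≤ a) :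
    sInf {r : ℝ | 0 < r ∧ a ≤ r} = a := by
  rcases ha.eq_or_lt with rfl | ha
  · have : {r : ℝ | 0 < r ∧ 0 ≤ r} = Set.Ioi 0 := by
      ext r
      exact ⟨fun h => h.1, fun h => ⟨h, h.le⟩⟩
    rw [this, csInf_Ioi]
  · have : {r : ℝ | 0 < r ∧ a ≤ r} = Set.Ici a := by
      ext r
      exact ⟨fun h => h.2, fun h => ⟨ha.trans_le h, h⟩⟩
    rw [this, csInf_Ici]

def empiricalMeasure {α : Type*} [MeasurableSpace α] {n : ℕ} (p : Fin n → α) : Measure α :=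
  (n : ℝ≥0∞)⁻¹ • ∑ i, Measure.dirac (p i)

theorem empiricalMeasure_toReal_apply {α : Type*} [MeasurableSpace α] {n : ℕ} (p : Fin n → α)
    {A : Set α} (hA : MeasurableSet A) [DecidablePred (· ∈ A)] :
    (empiricalMeasure p A).toReal = #{i | p i ∈ A} / n := by
  simp [empiricalMeasure, Measure.dirac_apply' _ hA,
    Set.indicator_apply, div_eq_inv_mul]

theorem deltaMeas_empiricalMeasure {d n : ℕ} (p : Fin n → Euc d) (x : Euc d) (j : Fin n)
    {m : ℝ} (hm : m ∈ Set.Ico ((j : ℝ) / n) ((j + 1) / n)) :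
    deltaMeas (empiricalMeasure p) m x
      = dist (p (Tuple.sort (fun i => dist (p i) x) j)) x := by
  classical
  have hn : (0 : ℝ) < n := by exact_mod_cast j.pos
  have hlt : ∀ c : ℕ, m < c / n ↔ (j : ℕ) < c := by
    intro c
    constructor
    · intro h
      exact_mod_cast (div_lt_div_iff_of_pos_right hn).1 (hm.1.trans_lt h)
    · intro h
      exact hm.2.trans_le (by gcongr; exact_mod_cast h)
  have hset : {r | 0 < r ∧ m < (empiricalMeasure p (closedBall x r)).toReal}
      = {r | 0 < r ∧ dist (p (Tuple.sort (fun i => dist (p i) x) j)) x ≤ r} := by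
    ext r
    simp only [Set.mem_ofPred_eq, empiricalMeasure_toReal_apply p measurableSet_closedBall,
      mem_closedBall, hlt, Tuple.sort_le_iff_lt_card (fun i => dist (p i) x)]
  rw [deltaMeas, hset, Real.sInf_setOf_pos_and_le dist_nonneg]

theorem integral_deltaMeas_empiricalMeasure_sq {d n k : ℕ} (p : Fin n → Euc d) (x : Euc d)
    (hk : k ≤ n) :
    ∫ m in (0 : ℝ)..(k : ℝ) / n, deltaMeas (empiricalMeasure p) m x ^ 2
      = ∑ j : Fin k,
          (1 / n : ℝ) * dist (p (Tuple.sort (fun i => dist (p i) x) (Fin.castLE hk j))) x ^ 2 := by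
  have hδ : ∀ j : Fin k, ∀ m ∈ Set.Ico ((j : ℝ) / n) ((j + 1) / n),
      deltaMeas (empiricalMeasure p) m x
        = dist (p (Tuple.sort (fun i => dist (p i) x) (Fin.castLE hk j))) x := fun j _ hm =>
    deltaMeas_empiricalMeasure p x (Fin.castLE hk j) hm
  have hleft : ∀ j : Fin k, (j : ℝ) / n ∈ Set.Ico ((j : ℝ) / n) ((j + 1) / n) := fun j =>
    have hn : (0 : ℝ) < n := by exact_mod_cast (Fin.castLE hk j).pos
    ⟨le_rfl, by gcongr; linarith⟩
  have hstep := intervalIntegral_eq_sum_of_eqOn_Ico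
    (h := fun m => deltaMeas (empiricalMeasure p) m x ^ 2) (a := fun j : ℕ => (j : ℝ) / n)
    (k := k) (fun i j hij => by dsimp only; gcongr) fun j hj m hm => by
      rw [hδ ⟨j, hj⟩ m (by simpa using hm), hδ ⟨j, hj⟩ _ (hleft ⟨j, hj⟩)]
  rw [Nat.cast_zero, zero_div] at hstep
  rw [hstep, Finset.sum_range]
  refine Fintype.sum_congr _ _ fun j => ?_
  rw [hδ j _ (hleft j), smul_eq_mul]
  push_cast
  ring

theorem statement9_general {d n : ℕ} (hn : 0 < n) (p : Fin n → Euc d)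
    (k0 : ℕ) (hk0n : k0 ≤ n)
    (x : Euc d) (s : Finset (Fin n)) (hcard : s.card = k0)
    (hNN : ∀ i ∈ s, ∀ j ∉ s, dist (p i) x ≤ dist (p j) x) :
    distToMeas ((n : ℝ≥0∞)⁻¹ • ∑ i, Measure.dirac (p i)) ((k0 : ℝ) / n) x
      = Real.sqrt ((1 / (k0 : ℝ)) * ∑ i ∈ s, dist (p i) x ^ 2) := by
  have hsorted :
      Monotone ((fun i => dist (p i) x ^ 2) ∘ Tuple.sort (fun i => dist (p i) x)) :=
    fun a b hab =>
      pow_le_pow_left₀ dist_nonneg (Tuple.monotone_sort (fun i => dist (p i) x) hab) 2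
  have hNN_sq : ∀ i ∈ s, ∀ j ∉ s, dist (p i) x ^ 2 ≤ dist (p j) x ^ 2 := fun i hi j hj =>
    pow_le_pow_left₀ dist_nonneg (hNN i hi j hj) 2
  change distToMeas (empiricalMeasure p) _ _ = _
  rw [distToMeas, integral_deltaMeas_empiricalMeasure_sq p x hk0n, ← Finset.mul_sum,
    sum_castLE_eq_sum_of_forall_le hk0n hsorted hcard hNN_sq]
  congr 1
  field_simp

/-- For the empirical measure `μ_P` of `n` points and `m₀ = k₀/n`, the distance to the
measure is `d_{μ_P,m₀}(x) = ((1/k₀) ∑_{p ∈ NN_P^{k₀}(x)} ‖p-x‖²)^{1/2}` where `NN_P^{k₀}(x)`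
is any set of `k₀` nearest neighbours of `x` in `P`. -/
theorem statement9 {d n : ℕ} (hn : 0 < n) (p : Fin n → Euc d)
    (k0 : ℕ) (hk0 : 1 ≤ k0) (hk0n : k0 ≤ n)
    (x : Euc d) (s : Finset (Fin n)) (hcard : s.card = k0)
    (hNN : ∀ i ∈ s, ∀ j ∉ s, dist (p i) x ≤ dist (p j) x) :
    distToMeas ((n : ℝ≥0∞)⁻¹ • ∑ i, Measure.dirac (p i)) ((k0 : ℝ) / n) x
      = Real.sqrt ((1 / (k0 : ℝ)) * ∑ i ∈ s, dist (p i) x ^ 2) :=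
  statement9_general hn p k0 hk0n x s hcard hNN
end
end
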